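/- Let Λ be the exterior algebra over a field F (characteristic ≠ 2) on generators a_t, b_t indexed by the tetrahedra t ⊂ {1,...,5}, and let ζ₁,...,ζ₅ ∈ F be pairwise distinct. With v_{12345,1}, ..., v_{12345,5} ∈ Λ¹ defined as in Korepanov's paper (the first three explicitly, the last two by the relations Σ v_j = 0 and Σ ζ_j v_j = 0), one has the equality of degree-3 Grassmann elements: (1/ζ₄₅)·v₁∧v₂∧v₃ = −(1/ζ₃₅)·v₁∧v₂∧v₄ = (1/ζ₁₂)·v₃∧v₄∧v₅, where ζ_{ij} = ζ_i − ζ_j and v_j := v_{12345,j}. -/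

import Mathlib

/-
The vectors `v₁, v₂, v₃` lie in the image of `ExteriorAlgebra.ι`, and the two
linear relations express `v₄` and `v₅` as combinations of `v₁, v₂, v₃` with coefficients
`ζ₅ᵢ / ζ₄₅` and `ζᵢ₄ / ζ₄₅`. A triple product of vectors in the span of `v₁, v₂, v₃` is
`v₁ v₂ v₃` times the determinant of their coefficients, so `v₁ v₂ v₄ = (ζ₅₃ / ζ₄₅) v₁ v₂ v₃` and
`v₃ v₄ v₅ = (ζ₁₂ / ζ₄₅) v₁ v₂ v₃`.
-/

noncomputable section

variable (F : Type*) [Field F]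

/-- Exterior (Grassmann) algebra on generators `a_t, b_t` indexed by tetrahedra
`t ⊂ {1,…,5}` (vertices 0-indexed as `Fin 5`). -/
abbrev Lam := ExteriorAlgebra F ((Bool × Finset (Fin 5)) → F)

/-- generator `a_t` -/
def av (t : Finset (Fin 5)) : Lam F := ExteriorAlgebra.ι F (Pi.single (false, t) 1)
/-- generator `b_t` -/
def bv (t : Finset (Fin 5)) : Lam F := ExteriorAlgebra.ι F (Pi.single (true, t) 1)

variable (ζ : Fin 5 → F)

/-- `v_{12345,1} = ζ₃₄ a₁₂₃₄ − ζ₃₅ a₁₂₃₅ + ζ₄₅ a₁₂₄₅ − ζ₄₅ a₁₃₄₅`. -/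
def v1 : Lam F :=
  (ζ 2 - ζ 3) • av F {0,1,2,3} - (ζ 2 - ζ 4) • av F {0,1,2,4}
    + (ζ 3 - ζ 4) • av F {0,1,3,4} - (ζ 3 - ζ 4) • av F {0,2,3,4}

/-- `v_{12345,2} = ζ₃₄ b₁₂₃₄ − ζ₃₅ b₁₂₃₅ + ζ₄₅ b₁₂₄₅ + ζ₄₅ a₂₃₄₅`. -/
def v2 : Lam F :=
  (ζ 2 - ζ 3) • bv F {0,1,2,3} - (ζ 2 - ζ 4) • bv F {0,1,2,4}
    + (ζ 3 - ζ 4) • bv F {0,1,3,4} + (ζ 3 - ζ 4) • av F {1,2,3,4}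

/-- `v_{12345,3} = −ζ₁₄ a₁₂₃₄ − ζ₂₄ b₁₂₃₄ + ζ₁₅ a₁₂₃₅ + ζ₂₅ b₁₂₃₅ − ζ₄₅ b₁₃₄₅ + ζ₄₅ b₂₃₄₅`. -/
def v3 : Lam F :=
  -((ζ 0 - ζ 3) • av F {0,1,2,3}) - (ζ 1 - ζ 3) • bv F {0,1,2,3}
    + (ζ 0 - ζ 4) • av F {0,1,2,4} + (ζ 1 - ζ 4) • bv F {0,1,2,4}
    - (ζ 3 - ζ 4) • bv F {0,2,3,4} + (ζ 3 - ζ 4) • bv F {1,2,3,4}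

namespace ExteriorAlgebra

variable {R M : Type*} [CommRing R] [AddCommGroup M] [Module R M]

theorem ι_mul_ι_swap (x y : M) : ι R y * ι R x = -(ι R x * ι R y) :=
  eq_neg_of_add_eq_zero_left (ι_add_mul_swap y x)

theorem ι_mul_ι_mul_ι_self_eq_zero (x y : M) : ι R x * ι R y * ι R x = 0 := by
  rw [mul_assoc, ι_mul_ι_swap, mul_neg, ← mul_assoc, ι_sq_zero, zero_mul, neg_zero]

theorem ι_mul_ι_mul_ι_rotate (x y z : M) : ι R z * ι R x * ι R y = ι R x * ι R y * ι R z := by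
  rw [ι_mul_ι_swap x z, neg_mul, mul_assoc, ι_mul_ι_swap y z, mul_neg, neg_neg, mul_assoc]

theorem ι_smul_add_smul_mul_ι_smul_add_smul (p q : M) (a b a' b' : R) :
    ι R (a • p + b • q) * ι R (a' • p + b' • q) = (a * b' - b * a') • (ι R p * ι R q) := by
  simp only [map_add, map_smul, add_mul, mul_add, smul_mul_smul, ι_sq_zero, ι_mul_ι_swap p q]
  module

theorem ι_mul_ι_mul_ι_smul_add_smul_add_smul (p q r : M) (a b c : R) :
    ι R p * ι R q * ι R (a • p + b • q + c • r) = c • (ι R p * ι R q * ι R r) := by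
  simp only [map_add, map_smul, mul_add, mul_smul_comm, ι_mul_ι_mul_ι_self_eq_zero,
    mul_assoc _ (ι R q) (ι R q), ι_sq_zero, mul_zero, smul_zero, zero_add]

theorem ι_mul_ι_smul_add_smul_add_smul_mul_ι_smul_add_smul_add_smul (p q r : M)
    (a b c a' b' c' : R) :
    ι R r * ι R (a • p + b • q + c • r) * ι R (a' • p + b' • q + c' • r)
      = (a * b' - b * a') • (ι R p * ι R q * ι R r) := by
  have hx : ι R r * ι R (a • p + b • q + c • r) = ι R r * ι R (a • p + b • q) := by
    rw [map_add, map_smul, mul_add, mul_smul_comm, ι_sq_zero, smul_zero, add_zero]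
  have hy : ι R r * ι R (a • p + b • q) * ι R (a' • p + b' • q + c' • r)
      = ι R r * ι R (a • p + b • q) * ι R (a' • p + b' • q) := by
    rw [map_add _ _ (c' • r), map_smul, mul_add, mul_smul_comm, ι_mul_ι_mul_ι_self_eq_zero,
      smul_zero, add_zero]
  rw [hx, hy, mul_assoc, ι_smul_add_smul_mul_ι_smul_add_smul, mul_smul_comm, ← mul_assoc,
    ι_mul_ι_mul_ι_rotate]

end ExteriorAlgebra

theorem last_two_eq_of_sum_eq_zero_of_weighted_sum_eq_zero {K V : Type*} [Field K]
    [AddCommGroup V] [Module K V] {z : Fin 5 → K} (h : z 3 ≠ z 4) {x₀ x₁ x₂ x₃ x₄ : V}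
    (hsum : x₀ + x₁ + x₂ + x₃ + x₄ = 0)
    (hzsum : z 0 • x₀ + z 1 • x₁ + z 2 • x₂ + z 3 • x₃ + z 4 • x₄ = 0) :
    x₃ = ((z 4 - z 0) / (z 3 - z 4)) • x₀ + ((z 4 - z 1) / (z 3 - z 4)) • x₁
        + ((z 4 - z 2) / (z 3 - z 4)) • x₂ ∧
      x₄ = ((z 0 - z 3) / (z 3 - z 4)) • x₀ + ((z 1 - z 3) / (z 3 - z 4)) • x₁
        + ((z 2 - z 3) / (z 3 - z 4)) • x₂ := by
  have h' : z 3 - z 4 ≠ 0 := sub_ne_zero.2 h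
  constructor <;> apply smul_right_injective V h' <;>
    simp only [smul_add, smul_smul, mul_div_cancel₀ _ h']
  · linear_combination (norm := module) hzsum - z 4 • hsum
  · linear_combination (norm := module) z 3 • hsum - hzsum

theorem av_mem_range_ι (t : Finset (Fin 5)) : av F t ∈ LinearMap.range (ExteriorAlgebra.ι F) :=
  LinearMap.mem_range_self _ _

theorem bv_mem_range_ι (t : Finset (Fin 5)) : bv F t ∈ LinearMap.range (ExteriorAlgebra.ι F) :=
  LinearMap.mem_range_self _ _

theorem v1_mem_range_ι : v1 F ζ ∈ LinearMap.range (ExteriorAlgebra.ι F) := by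
  unfold v1
  apply_rules [add_mem, sub_mem, neg_mem, Submodule.smul_mem, av_mem_range_ι, bv_mem_range_ι]

theorem v2_mem_range_ι : v2 F ζ ∈ LinearMap.range (ExteriorAlgebra.ι F) := by
  unfold v2
  apply_rules [add_mem, sub_mem, neg_mem, Submodule.smul_mem, av_mem_range_ι, bv_mem_range_ι]

theorem v3_mem_range_ι : v3 F ζ ∈ LinearMap.range (ExteriorAlgebra.ι F) := by
  unfold v3
  apply_rules [add_mem, sub_mem, neg_mem, Submodule.smul_mem, av_mem_range_ι, bv_mem_range_ι]

theorem weight_independent_of_triple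
    (hζ : Function.Injective ζ) (v4 v5 : Lam F)
    (hsum : v1 F ζ + v2 F ζ + v3 F ζ + v4 + v5 = 0)
    (hzsum : ζ 0 • v1 F ζ + ζ 1 • v2 F ζ + ζ 2 • v3 F ζ + ζ 3 • v4 + ζ 4 • v5 = 0) :
    (ζ 3 - ζ 4)⁻¹ • (v1 F ζ * v2 F ζ * v3 F ζ)
      = -((ζ 2 - ζ 4)⁻¹ • (v1 F ζ * v2 F ζ * v4)) ∧
    (ζ 3 - ζ 4)⁻¹ • (v1 F ζ * v2 F ζ * v3 F ζ)
      = (ζ 0 - ζ 1)⁻¹ • (v3 F ζ * v4 * v5) := by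
  have h34 : ζ 3 - ζ 4 ≠ 0 := sub_ne_zero.2 (hζ.ne (by decide))
  have h24 : ζ 2 - ζ 4 ≠ 0 := sub_ne_zero.2 (hζ.ne (by decide))
  have h01 : ζ 0 - ζ 1 ≠ 0 := sub_ne_zero.2 (hζ.ne (by decide))
  have hv45 := last_two_eq_of_sum_eq_zero_of_weighted_sum_eq_zero (sub_ne_zero.1 h34) hsum hzsum
  obtain ⟨p, hp⟩ := LinearMap.mem_range.1 (v1_mem_range_ι F ζ)
  obtain ⟨q, hq⟩ := LinearMap.mem_range.1 (v2_mem_range_ι F ζ)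
  obtain ⟨r, hr⟩ := LinearMap.mem_range.1 (v3_mem_range_ι F ζ)
  simp only [← hp, ← hq, ← hr, ← map_smul, ← map_add] at hv45 ⊢
  rw [hv45.1, hv45.2, ExteriorAlgebra.ι_mul_ι_mul_ι_smul_add_smul_add_smul,
    ExteriorAlgebra.ι_mul_ι_smul_add_smul_add_smul_mul_ι_smul_add_smul_add_smul, smul_smul,
    smul_smul, ← neg_smul]
  constructor <;> congr 1 <;> field_simp <;> ring

end
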